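/- arXiv:2208.05336 — 5 statements merged into one kernel-verified Lean document; each statement's English description precedes it below -/
import Mathlib

section
/- Let j : ℍ² → M₂(ℝ) be defined by j(x+iy) = [[x/y, −(x²+y²)/y], [1/y, −x/y]] for y > 0, and for a tangent vector (a,b) ∈ ℝ² let Dj_z(a,b) = a·∂j/∂x + b·∂j/∂y denote the directional derivative of j at z = x+iy. Then for all z = x+iy with y > 0 and all (a,b), (a′,b′) ∈ ℝ²: (1/2)·tr(Dj_z(a,b)·Dj_z(a′,b′)) = (a a′ + b b′)/y², and −(1/2)·tr(Dj_z(a,b)·j(z)·Dj_z(a′,b′)) = −(a b′ − b a′)/y². In other words, j pulls back the Kähler structure ⟨A,B⟩ = (1/2)tr(AB), Ω(A,B) = −(1/2)tr(A·j(z)·B) on 𝒥(ℝ²) to the hyperbolic Kähler structure (g_{ℍ²}, −dx∧dy/y²) on ℍ². -/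
open Matrix

/-- The map `j : ℍ² → M₂(ℝ)` in real coordinates `(x,y)` with `y > 0`. -/
noncomputable def jmat2 (x y : ℝ) : Matrix (Fin 2) (Fin 2) ℝ :=
  !![x / y, -(x ^ 2 + y ^ 2) / y;
     1 / y, -x / y]

/-- The directional derivative `Dj_z(a,b) = a·∂j/∂x + b·∂j/∂y` of `j` at `z = x+iy`,
computed entrywise. -/
noncomputable def Dj (x y a b : ℝ) : Matrix (Fin 2) (Fin 2) ℝ :=
  a • Matrix.of (fun i j => deriv (fun s => jmat2 s y i j) x) +
  b • Matrix.of (fun i j => deriv (fun s => jmat2 x s i j) y)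

lemma jmat2_deriv_fst (x y : ℝ) :
    Matrix.of (fun i j => deriv (fun s => jmat2 s y i j) x) =
      !![1 / y, -2 * x / y; 0, -1 / y] := by
  ext i j
  fin_cases i <;> fin_cases j <;> simp [jmat2, neg_div]

lemma jmat2_deriv_snd (x : ℝ) {y : ℝ} (hy : y ≠ 0) :
    Matrix.of (fun i j => deriv (fun s => jmat2 x s i j) y) =
      !![-x / y ^ 2, x ^ 2 / y ^ 2 - 1; -1 / y ^ 2, x / y ^ 2] := by
  ext i j
  fin_cases i <;> fin_cases j <;> simp [jmat2, neg_div, hy]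
  field_simp
  ring

lemma Dj_eq (x : ℝ) {y : ℝ} (hy : y ≠ 0) (a b : ℝ) :
    Dj x y a b = !![a / y - b * x / y ^ 2, -2 * a * x / y + b * (x ^ 2 / y ^ 2 - 1);
                    -b / y ^ 2, -a / y + b * x / y ^ 2] := by
  rw [Dj, jmat2_deriv_fst, jmat2_deriv_snd x hy]
  ext i j
  fin_cases i <;> fin_cases j <;> simp <;> ring

lemma trace_Dj_mul_Dj (x : ℝ) {y : ℝ} (hy : y ≠ 0) (a b a' b' : ℝ) :
    (Dj x y a b * Dj x y a' b').trace = 2 * (a * a' + b * b') / y ^ 2 := by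
  rw [Dj_eq x hy, Dj_eq x hy, mul_fin_two, trace_fin_two_of]
  field_simp
  ring

lemma trace_Dj_mul_jmat2_mul_Dj (x : ℝ) {y : ℝ} (hy : y ≠ 0) (a b a' b' : ℝ) :
    (Dj x y a b * jmat2 x y * Dj x y a' b').trace = 2 * (a * b' - b * a') / y ^ 2 := by
  rw [Dj_eq x hy, Dj_eq x hy, jmat2, mul_fin_two, mul_fin_two, trace_fin_two_of]
  field_simp
  ring

/-- `j` pulls back the Kähler structure `⟨A,B⟩ = (1/2)tr(AB)`,
`Ω(A,B) = −(1/2)tr(A·j(z)·B)` on `𝒥(ℝ²)` to the hyperbolic Kähler structure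
`(g_{ℍ²}, −dx∧dy/y²)` on `ℍ²`. -/
theorem stmt1 :
    ∀ x y : ℝ, 0 < y → ∀ a b a' b' : ℝ,
      (1 / 2) * (Dj x y a b * Dj x y a' b').trace = (a * a' + b * b') / y ^ 2 ∧
      -((1 / 2) * (Dj x y a b * jmat2 x y * Dj x y a' b').trace) =
        -((a * b' - b * a') / y ^ 2) := by
  intro x y hy a b a' b'
  rw [trace_Dj_mul_Dj x hy.ne', trace_Dj_mul_jmat2_mul_Dj x hy.ne']
  constructor <;> ring
end

section
/- For every point (x,y,u,v) ∈ ℝ⁴ with y > 0, the determinant of the 4×4 matrix G_f(x,y,u,v) equals (16/9)·y²·f′(t)²·(1−f(t))², where t = y³(u²+v²). In particular, if f′(t) ≠ 0 and f(t) ≤ 0 then G_f is invertible with positive determinant. -/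
open Matrix

/-- The coefficient matrix `G_f(x,y,u,v)` of the pseudo-Riemannian metric `g_f` on
`ℍ²×ℂ ≅ {(x,y,u,v) : y > 0}`, where `f, f′` are evaluated at `t = y³(u²+v²)`. -/
noncomputable def Gf (f : ℝ → ℝ) (x y u v : ℝ) : Matrix (Fin 4) (Fin 4) ℝ :=
  let F := f (y ^ 3 * (u ^ 2 + v ^ 2))
  let F' := deriv f (y ^ 3 * (u ^ 2 + v ^ 2))
  !![(1 - F + 3 * (u ^ 2 + v ^ 2) * y ^ 3 * F') / y ^ 2, 0, 2 * F' * v * y ^ 2,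
       -2 * F' * u * y ^ 2;
     0, (1 - F + 3 * (u ^ 2 + v ^ 2) * y ^ 3 * F') / y ^ 2, 2 * F' * u * y ^ 2,
       2 * F' * v * y ^ 2;
     2 * F' * v * y ^ 2, 2 * F' * u * y ^ 2, (4 / 3) * F' * y ^ 3, 0;
     -2 * F' * u * y ^ 2, 2 * F' * v * y ^ 2, 0, (4 / 3) * F' * y ^ 3]

lemma my_det_fin_four {R : Type*} [CommRing R] (M : Matrix (Fin 4) (Fin 4) R) :
    M.det =
      M 0 0 * M 1 1 * M 2 2 * M 3 3 - M 0 0 * M 1 1 * M 2 3 * M 3 2 -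
        M 0 0 * M 1 2 * M 2 1 * M 3 3 + M 0 0 * M 1 2 * M 2 3 * M 3 1 +
        M 0 0 * M 1 3 * M 2 1 * M 3 2 - M 0 0 * M 1 3 * M 2 2 * M 3 1 -
        M 0 1 * M 1 0 * M 2 2 * M 3 3 + M 0 1 * M 1 0 * M 2 3 * M 3 2 +
        M 0 1 * M 1 2 * M 2 0 * M 3 3 - M 0 1 * M 1 2 * M 2 3 * M 3 0 -
        M 0 1 * M 1 3 * M 2 0 * M 3 2 + M 0 1 * M 1 3 * M 2 2 * M 3 0 +
        M 0 2 * M 1 0 * M 2 1 * M 3 3 - M 0 2 * M 1 0 * M 2 3 * M 3 1 -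
        M 0 2 * M 1 1 * M 2 0 * M 3 3 + M 0 2 * M 1 1 * M 2 3 * M 3 0 +
        M 0 2 * M 1 3 * M 2 0 * M 3 1 - M 0 2 * M 1 3 * M 2 1 * M 3 0 -
        M 0 3 * M 1 0 * M 2 1 * M 3 2 + M 0 3 * M 1 0 * M 2 2 * M 3 1 +
        M 0 3 * M 1 1 * M 2 0 * M 3 2 - M 0 3 * M 1 1 * M 2 2 * M 3 0 -
        M 0 3 * M 1 2 * M 2 0 * M 3 1 + M 0 3 * M 1 2 * M 2 1 * M 3 0 := by
  rw [Matrix.det_succ_row_zero]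
  simp [Fin.sum_univ_succ, Matrix.det_fin_three, Fin.succAbove, Matrix.submatrix_apply,
    show (Fin.succ 2 : Fin 4) = 3 from rfl, show (Fin.castSucc 2 : Fin 4) = 2 from rfl]
  ring

theorem stmt2 (f : ℝ → ℝ) (hf : ContDiff ℝ (⊤ : ℕ∞) f) :
    ∀ x y u v : ℝ, 0 < y →
      (Gf f x y u v).det =
        (16 / 9) * y ^ 2 * (deriv f (y ^ 3 * (u ^ 2 + v ^ 2))) ^ 2 *
          (1 - f (y ^ 3 * (u ^ 2 + v ^ 2))) ^ 2 ∧
      (deriv f (y ^ 3 * (u ^ 2 + v ^ 2)) ≠ 0 → f (y ^ 3 * (u ^ 2 + v ^ 2)) ≤ 0 →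
        IsUnit (Gf f x y u v) ∧ 0 < (Gf f x y u v).det) := by
  intro x y u v hy
  have hy2 : (y : ℝ) ^ 2 ≠ 0 := by positivity
  have hdet : (Gf f x y u v).det =
      (16 / 9) * y ^ 2 * (deriv f (y ^ 3 * (u ^ 2 + v ^ 2))) ^ 2 *
        (1 - f (y ^ 3 * (u ^ 2 + v ^ 2))) ^ 2 := by
    rw [my_det_fin_four]
    simp only [Gf, Matrix.of_apply, Matrix.cons_val', Matrix.cons_val_zero, Matrix.cons_val_one, Matrix.head_cons,
      Matrix.empty_val', Matrix.cons_val_fin_one, Matrix.head_fin_const, Matrix.cons_val_two,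
      Matrix.cons_val_three, Matrix.tail_cons]
    field_simp
    ring
  refine ⟨hdet, fun hF' hF => ?_⟩
  have hpos : 0 < (Gf f x y u v).det := by
    rw [hdet]
    have h1 : (0:ℝ) < 1 - f (y ^ 3 * (u ^ 2 + v ^ 2)) := by linarith
    positivity
  exact ⟨(Matrix.isUnit_iff_isUnit_det _).mpr (isUnit_iff_ne_zero.mpr hpos.ne'), hpos⟩
end

section
/- Let J₀ be the 4×4 block-diagonal matrix with both 2×2 blocks equal to [[0,−1],[1,0]]. Then for every (x,y,u,v) ∈ ℝ⁴ with y > 0: (i) J₀·J₀ = −Id; (ii) J₀ᵀ·G_f(x,y,u,v)·J₀ = G_f(x,y,u,v) (the pair (G_f, J₀) is pseudo-Hermitian); and (iii) G_f(x,y,u,v)·J₀ = Ω_f(x,y,u,v), i.e. the fundamental 2-form ω_f(X,Y) = g_f(X, J₀Y) has coefficient matrix Ω_f. -/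
open Matrix

/-- The coefficient matrix `Ω_f(x,y,u,v)` of the 2-form `ω_f` on
`ℍ²×ℂ ≅ {(x,y,u,v) : y > 0}`, where `f, f′` are evaluated at `t = y³(u²+v²)`. -/
noncomputable def Omf (f : ℝ → ℝ) (x y u v : ℝ) : Matrix (Fin 4) (Fin 4) ℝ :=
  let F := f (y ^ 3 * (u ^ 2 + v ^ 2))
  let F' := deriv f (y ^ 3 * (u ^ 2 + v ^ 2))
  !![0, (-1 + F - 3 * F' * y ^ 3 * (u ^ 2 + v ^ 2)) / y ^ 2, -2 * y ^ 2 * F' * u,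
       -2 * y ^ 2 * F' * v;
     -((-1 + F - 3 * F' * y ^ 3 * (u ^ 2 + v ^ 2)) / y ^ 2), 0, 2 * y ^ 2 * F' * v,
       -2 * y ^ 2 * F' * u;
     -(-2 * y ^ 2 * F' * u), -(2 * y ^ 2 * F' * v), 0, -(4 / 3) * F' * y ^ 3;
     -(-2 * y ^ 2 * F' * v), -(-2 * y ^ 2 * F' * u), -(-(4 / 3) * F' * y ^ 3), 0]


/-- The standard complex structure `J₀` on `ℝ⁴ ≅ ℂ × ℂ`. -/
def J0 : Matrix (Fin 4) (Fin 4) ℝ :=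
  !![0, -1, 0, 0;
     1, 0, 0, 0;
     0, 0, 0, -1;
     0, 0, 1, 0]

theorem mul_fin_four {α : Type*} [AddCommMonoid α] [Mul α]
    (a00 a01 a02 a03 a10 a11 a12 a13 a20 a21 a22 a23 a30 a31 a32 a33 b00 b01 b02 b03 b10 b11 b12 b13 b20 b21 b22 b23 b30 b31 b32 b33 : α) :
    !![a00, a01, a02, a03;
     a10, a11, a12, a13;
     a20, a21, a22, a23;
     a30, a31, a32, a33] * !![b00, b01, b02, b03;
     b10, b11, b12, b13;
     b20, b21, b22, b23;
     b30, b31, b32, b33] =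
    !![a00*b00 + a01*b10 + a02*b20 + a03*b30, a00*b01 + a01*b11 + a02*b21 + a03*b31, a00*b02 + a01*b12 + a02*b22 + a03*b32, a00*b03 + a01*b13 + a02*b23 + a03*b33;
     a10*b00 + a11*b10 + a12*b20 + a13*b30, a10*b01 + a11*b11 + a12*b21 + a13*b31, a10*b02 + a11*b12 + a12*b22 + a13*b32, a10*b03 + a11*b13 + a12*b23 + a13*b33;
     a20*b00 + a21*b10 + a22*b20 + a23*b30, a20*b01 + a21*b11 + a22*b21 + a23*b31, a20*b02 + a21*b12 + a22*b22 + a23*b32, a20*b03 + a21*b13 + a22*b23 + a23*b33;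
     a30*b00 + a31*b10 + a32*b20 + a33*b30, a30*b01 + a31*b11 + a32*b21 + a33*b31, a30*b02 + a31*b12 + a32*b22 + a33*b32, a30*b03 + a31*b13 + a32*b23 + a33*b33] := by
  ext i j
  fin_cases i <;> fin_cases j <;>
    simp [Matrix.mul_apply, Fin.sum_univ_four]

theorem stmt3 (f : ℝ → ℝ) (hf : ContDiff ℝ (⊤ : ℕ∞) f) :
    ∀ x y u v : ℝ, 0 < y →
      J0 * J0 = -1 ∧
      J0ᵀ * Gf f x y u v * J0 = Gf f x y u v ∧
      Gf f x y u v * J0 = Omf f x y u v := by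
  intro x y u v hy
  refine ⟨?_, ?_, ?_⟩
  · show (!![0, -1, 0, 0; 1, 0, 0, 0; 0, 0, 0, -1; 0, 0, 1, 0] : Matrix (Fin 4) (Fin 4) ℝ) * _ = _
    rw [J0, mul_fin_four]
    ext i j
    fin_cases i <;> fin_cases j <;>
      simp [Matrix.vecHead, Matrix.vecTail, Matrix.neg_apply, Matrix.one_apply]
  · rw [Gf, J0]
    rw [show (!![0, -1, 0, 0; 1, 0, 0, 0; 0, 0, 0, -1; 0, 0, 1, 0] : Matrix (Fin 4) (Fin 4) ℝ)ᵀ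
        = !![0, 1, 0, 0; -1, 0, 0, 0; 0, 0, 0, 1; 0, 0, -1, 0] by
      ext i j; fin_cases i <;> fin_cases j <;> rfl]
    rw [mul_fin_four, mul_fin_four]
    ext i j
    fin_cases i <;> fin_cases j <;> simp <;> ring
  · rw [Gf, Omf, J0, mul_fin_four]
    ext i j
    fin_cases i <;> fin_cases j <;> simp <;> ring
end

section
/- The map j : ℍ² → M₂(ℝ), j(x+iy) = [[x/y, −(x²+y²)/y],[1/y, −x/y]], is equivariant with respect to Möbius transformations and conjugation: for every P = [[a,b],[c,d]] ∈ SL(2,ℝ) and every z ∈ ℂ with Im z > 0, j((az+b)/(cz+d)) = P · j(z) · P⁻¹. Consequently, for every traceless X ∈ 𝔰𝔩(2,ℝ), tr(j(P·z)·X) = tr(j(z)·P⁻¹XP), which is the equivariance of the moment map μ of the SL(2,ℝ)-action with respect to the coadjoint action. -/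
/-!
`j(z)` is the unique real matrix having `(z, 1)` as an eigenvector with eigenvalue `i`.
A real matrix `P` sends `(z, 1)` to `(cz + d) • (P·z, 1)`, so `P j(z) P⁻¹` has `(P·z, 1)` as an
eigenvector with eigenvalue `i`, hence equals `j(P·z)`. The trace identity is then cyclicity of
the trace.
-/

open Matrix

/-- The map `j : ℍ² → M₂(ℝ)`, `j(x+iy) = [[x/y, −(x²+y²)/y], [1/y, −x/y]]`. -/
noncomputable def jmat (z : ℂ) : Matrix (Fin 2) (Fin 2) ℝ :=
  !![z.re / z.im, -(z.re ^ 2 + z.im ^ 2) / z.im;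
     1 / z.im, -z.re / z.im]

open Complex

theorem map_ofReal_mulVec_vec_one (p q r s : ℝ) (z : ℂ) :
    (!![p, q; r, s]).map ((↑) : ℝ → ℂ) *ᵥ ![z, 1] = ![p * z + q, r * z + s] := by
  ext i
  fin_cases i <;> simp [mulVec, dotProduct]

theorem jmat_map_mulVec {z : ℂ} (hz : z.im ≠ 0) :
    (jmat z).map ((↑) : ℝ → ℂ) *ᵥ ![z, 1] = I • ![z, 1] := by
  rw [jmat, map_ofReal_mulVec_vec_one]
  ext i
  fin_cases i <;> apply Complex.ext <;>
    simp only [Fin.zero_eta, Fin.mk_one, cons_val_zero, cons_val_one, cons_val_fin_one,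
      Pi.smul_apply, smul_eq_mul, add_re, add_im, mul_re, mul_im, ofReal_re, ofReal_im,
      I_re, I_im, one_re, one_im] <;>
    field_simp <;> ring

theorem eq_jmat_of_map_mulVec {z : ℂ} (hz : z.im ≠ 0) {M : Matrix (Fin 2) (Fin 2) ℝ}
    (hM : M.map ((↑) : ℝ → ℂ) *ᵥ ![z, 1] = I • ![z, 1]) : M = jmat z := by
  rw [eta_fin_two M, map_ofReal_mulVec_vec_one] at hM
  obtain ⟨⟨e1, e2⟩, ⟨f1, f2⟩⟩ : (M 0 0 * z.re + M 0 1 = -z.im ∧ M 0 0 * z.im = z.re) ∧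
      (M 1 0 * z.re + M 1 1 = 0 ∧ M 1 0 * z.im = 1) := by
    simpa [Complex.ext_iff] using hM
  have m00 : M 0 0 = z.re / z.im := by rw [eq_div_iff hz]; exact e2
  have m01 : M 0 1 = -(z.re ^ 2 + z.im ^ 2) / z.im := by
    rw [eq_div_iff hz]; linear_combination z.im * e1 - z.re * e2
  have m10 : M 1 0 = 1 / z.im := by rw [eq_div_iff hz]; exact f2
  have m11 : M 1 1 = -z.re / z.im := by
    rw [eq_div_iff hz]; linear_combination z.im * f1 - z.re * f2
  rw [eta_fin_two M, m00, m01, m10, m11, jmat]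

theorem im_mobius (a b c d : ℝ) (z : ℂ) :
    ((a * z + b) / (c * z + d)).im = (a * d - b * c) * z.im / normSq (c * z + d) := by
  simp only [div_im, add_re, add_im, mul_re, mul_im, ofReal_re, ofReal_im, zero_mul, add_zero,
    sub_zero]
  ring

theorem mobius_denom_ne_zero {a b c d : ℝ} (hdet : a * d - b * c ≠ 0) {z : ℂ} (hz : z.im ≠ 0) :
    (c : ℂ) * z + d ≠ 0 := by
  intro h
  have hc : c = 0 := by simpa [hz] using congrArg im h
  have hd : d = 0 := by simpa [hc] using congrArg re h
  simp [hc, hd] at hdet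

theorem jmat_mobius {a b c d : ℝ} (hdet : a * d - b * c ≠ 0) {z : ℂ} (hz : z.im ≠ 0) :
    jmat ((a * z + b) / (c * z + d)) = !![a, b; c, d] * jmat z * (!![a, b; c, d])⁻¹ := by
  set P := !![a, b; c, d]
  have hden := mobius_denom_ne_zero hdet hz
  have hP : P⁻¹ * P = 1 := nonsing_inv_mul P (by simpa [P, det_fin_two_of] using hdet)
  have hw : ((a * z + b) / (c * z + d)).im ≠ 0 := by
    rw [im_mobius]
    exact div_ne_zero (mul_ne_zero hdet hz) (normSq_pos.mpr hden).ne'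
  have hmap : ∀ A B : Matrix (Fin 2) (Fin 2) ℝ,
      (A * B).map ((↑) : ℝ → ℂ) = A.map (↑) * B.map (↑) :=
    fun _ _ => Matrix.map_mul (f := ofRealHom)
  have hPv : P.map ((↑) : ℝ → ℂ) *ᵥ ![z, 1] = (c * z + d) • ![(a * z + b) / (c * z + d), 1] := by
    rw [map_ofReal_mulVec_vec_one]
    ext i
    fin_cases i <;> simp [mul_div_cancel₀ _ hden]
  have hconj : (P * jmat z * P⁻¹).map ((↑) : ℝ → ℂ) *ᵥ (P.map (↑) *ᵥ ![z, 1]) =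
      I • (P.map (↑) *ᵥ ![z, 1]) := by
    rw [mulVec_mulVec, ← hmap, Matrix.mul_assoc, hP, Matrix.mul_one, hmap, ← mulVec_mulVec,
      jmat_map_mulVec hz, mulVec_smul]
  rw [hPv, mulVec_smul, smul_comm] at hconj
  exact (eq_jmat_of_map_mulVec hw (smul_right_injective _ hden hconj)).symm

/-- `j` is equivariant with respect to Möbius transformations and conjugation;
consequently `tr(j(P·z)·X) = tr(j(z)·P⁻¹XP)` for traceless `X`, which is the
equivariance of the moment map of the `SL(2,ℝ)`-action for the coadjoint action. -/
theorem stmt10 (a b c d : ℝ) (h : a * d - b * c = 1) :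
    ∀ z : ℂ, 0 < z.im →
      jmat (((a : ℂ) * z + b) / ((c : ℂ) * z + d)) =
        !![a, b; c, d] * jmat z * (!![a, b; c, d])⁻¹ ∧
      ∀ X : Matrix (Fin 2) (Fin 2) ℝ, X.trace = 0 →
        (jmat (((a : ℂ) * z + b) / ((c : ℂ) * z + d)) * X).trace =
          (jmat z * ((!![a, b; c, d])⁻¹ * X * !![a, b; c, d])).trace := by
  intro z hz
  have hj := jmat_mobius (h ▸ one_ne_zero) hz.ne'
  refine ⟨hj, fun X _ => ?_⟩
  rw [hj]
  simp only [Matrix.mul_assoc]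
  rw [trace_mul_comm]
  simp only [Matrix.mul_assoc]
end

section
/- Assume f : ℝ → ℝ is smooth with f(t) ≤ 0 and f′(t) < 0 for all t ≥ 0. Then the metric g_f has neutral signature (2,2) at every point: for every (x,y,u,v) with y > 0, the symmetric matrix G_f(x,y,u,v) is invertible and there exist a 2-dimensional subspace of ℝ⁴ on which the quadratic form X ↦ XᵀG_fX is positive definite and a 2-dimensional subspace on which it is negative definite; equivalently, G_f has exactly two positive and two negative eigenvalues. -/
open Matrix

private lemma detFour (A : Matrix (Fin 4) (Fin 4) ℝ) : A.det =
    A 0 0 * (A 1 1 * A 2 2 * A 3 3 - A 1 1 * A 2 3 * A 3 2 - A 1 2 * A 2 1 * A 3 3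
      + A 1 2 * A 2 3 * A 3 1 + A 1 3 * A 2 1 * A 3 2 - A 1 3 * A 2 2 * A 3 1)
  - A 0 1 * (A 1 0 * A 2 2 * A 3 3 - A 1 0 * A 2 3 * A 3 2 - A 1 2 * A 2 0 * A 3 3
      + A 1 2 * A 2 3 * A 3 0 + A 1 3 * A 2 0 * A 3 2 - A 1 3 * A 2 2 * A 3 0)
  + A 0 2 * (A 1 0 * A 2 1 * A 3 3 - A 1 0 * A 2 3 * A 3 1 - A 1 1 * A 2 0 * A 3 3
      + A 1 1 * A 2 3 * A 3 0 + A 1 3 * A 2 0 * A 3 1 - A 1 3 * A 2 1 * A 3 0)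
  - A 0 3 * (A 1 0 * A 2 1 * A 3 2 - A 1 0 * A 2 2 * A 3 1 - A 1 1 * A 2 0 * A 3 2
      + A 1 1 * A 2 2 * A 3 0 + A 1 2 * A 2 0 * A 3 1 - A 1 2 * A 2 1 * A 3 0) := by
  rw [Matrix.det_succ_row_zero]
  simp [Fin.sum_univ_succ, Matrix.det_fin_three, Fin.succAbove,
    show Fin.succ (2:Fin 3) = 3 from rfl, show Fin.castSucc (2:Fin 3) = 2 from rfl]
  ring

set_option maxHeartbeats 2000000 in
/-- The metric `g_f` has neutral signature `(2,2)` at every point of `{y > 0}`. -/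
theorem stmt19 (f : ℝ → ℝ) (hf : ContDiff ℝ (⊤ : ℕ∞) f)
    (hfneg : ∀ t : ℝ, 0 ≤ t → f t ≤ 0)
    (hf' : ∀ t : ℝ, 0 ≤ t → deriv f t < 0) :
    ∀ x y u v : ℝ, 0 < y →
      IsUnit (Gf f x y u v) ∧
      ∃ V W : Submodule ℝ (Fin 4 → ℝ),
        Module.finrank ℝ V = 2 ∧ Module.finrank ℝ W = 2 ∧
        (∀ ξ ∈ V, ξ ≠ 0 → 0 < ξ ⬝ᵥ (Gf f x y u v).mulVec ξ) ∧
        (∀ ξ ∈ W, ξ ≠ 0 → ξ ⬝ᵥ (Gf f x y u v).mulVec ξ < 0) := by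
  intro x y u v hy
  have ht : (0:ℝ) ≤ y ^ 3 * (u ^ 2 + v ^ 2) := by positivity
  set F : ℝ := f (y ^ 3 * (u ^ 2 + v ^ 2)) with hFdef
  set F' : ℝ := deriv f (y ^ 3 * (u ^ 2 + v ^ 2)) with hF'def
  have hF' : F' < 0 := hf' _ ht
  have hF : F ≤ 0 := hfneg _ ht
  have h1F : 0 < 1 - F := by linarith
  have hy0 : y ≠ 0 := ne_of_gt hy
  have hF'0 : F' ≠ 0 := ne_of_lt hF'
  -- the positive subspace generators
  set w1 : Fin 4 → ℝ := ![(4/3)*F'*y^3, 0, -(2*F'*v*y^2), 2*F'*u*y^2] with hw1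
  set w2 : Fin 4 → ℝ := ![0, (4/3)*F'*y^3, -(2*F'*u*y^2), -(2*F'*v*y^2)] with hw2
  set e3 : Fin 4 → ℝ := ![0, 0, 1, 0] with he3
  set e4 : Fin 4 → ℝ := ![0, 0, 0, 1] with he4
  have hc : (4/3)*F'*y^3 ≠ 0 := by
    have : (4/3)*F'*y^3 < 0 := by
      have hy3 : 0 < y^3 := by positivity
      nlinarith
    exact ne_of_lt this
  constructor
  · rw [Matrix.isUnit_iff_isUnit_det, isUnit_iff_ne_zero]
    have hdet : (Gf f x y u v).det = (16/9) * F'^2 * y^2 * (1-F)^2 := by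
      rw [detFour]
      simp only [Gf, ← hFdef, ← hF'def]
      norm_num [Matrix.cons_val_zero, Matrix.cons_val_one, Matrix.head_cons,
        Matrix.cons_val_two, Matrix.cons_val_three, Matrix.tail_cons, Matrix.cons_val']
      field_simp
      ring
    rw [hdet]
    positivity
  refine ⟨Submodule.span ℝ {w1, w2}, Submodule.span ℝ {e3, e4}, ?_, ?_, ?_, ?_⟩
  · -- finrank of V
    have hli : LinearIndependent ℝ ![w1, w2] := by
      rw [LinearIndependent.pair_iff]
      intro s t hst
      have h0 := congrFun hst 0
      have h1 := congrFun hst 1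
      simp [hw1, hw2] at h0 h1
      constructor
      · rcases h0 with h | h | h
        · exact h
        · exact absurd h hF'0
        · exact absurd h hy0
      · rcases h1 with h | h | h
        · exact h
        · exact absurd h hF'0
        · exact absurd h hy0
    have := finrank_span_eq_card (R := ℝ) hli
    rw [show Set.range ![w1, w2] = {w1, w2} by
      simp [Set.range_subset_iff]; exact Set.pair_comm w2 w1] at this
    simpa using this
  · have hli : LinearIndependent ℝ ![e3, e4] := by
      rw [LinearIndependent.pair_iff]
      intro s t hst
      have h0 := congrFun hst 2
      have h1 := congrFun hst 3
      simp [he3, he4] at h0 h1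
      exact ⟨h0, h1⟩
    have := finrank_span_eq_card (R := ℝ) hli
    rw [show Set.range ![e3, e4] = {e3, e4} by
      simp [Set.range_subset_iff]; exact Set.pair_comm e4 e3] at this
    simpa using this
  · -- positive definite on V
    intro ξ hξ hξ0
    rw [Submodule.mem_span_pair] at hξ
    obtain ⟨s, t, hst⟩ := hξ
    have hst' : ¬ (s = 0 ∧ t = 0) := by
      rintro ⟨rfl, rfl⟩
      simp at hst
      exact hξ0 hst.symm
    have hpos : 0 < s^2 + t^2 := by
      rcases not_and_or.mp hst' with h | h
      · have : 0 < s^2 := by positivity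
        nlinarith [sq_nonneg t]
      · have : 0 < t^2 := by positivity
        nlinarith [sq_nonneg s]
    have hQ : ξ ⬝ᵥ (Gf f x y u v).mulVec ξ = (16/9) * F'^2 * y^4 * (1-F) * (s^2+t^2) := by
      subst hst
      simp only [Gf, Matrix.mulVec, dotProduct, Fin.sum_univ_four, hw1, hw2,
        ← hFdef, ← hF'def, Pi.add_apply, Pi.smul_apply, Matrix.cons_val', Matrix.cons_val_zero,
        Matrix.cons_val_one, Matrix.head_cons, Matrix.cons_val_two, Matrix.tail_cons,
        Matrix.cons_val_three, Matrix.empty_val', Matrix.cons_val_fin_one, Matrix.of_apply,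
        Matrix.head_fin_const, smul_eq_mul]
      field_simp
      ring
    rw [hQ]
    have : 0 < (16/9) * F'^2 * y^4 * (1-F) := by positivity
    exact mul_pos this hpos
  · -- negative definite on W
    intro ξ hξ hξ0
    rw [Submodule.mem_span_pair] at hξ
    obtain ⟨s, t, hst⟩ := hξ
    have hst' : ¬ (s = 0 ∧ t = 0) := by
      rintro ⟨rfl, rfl⟩
      simp at hst
      exact hξ0 hst.symm
    have hpos : 0 < s^2 + t^2 := by
      rcases not_and_or.mp hst' with h | h
      · have : 0 < s^2 := by positivity
        nlinarith [sq_nonneg t]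
      · have : 0 < t^2 := by positivity
        nlinarith [sq_nonneg s]
    have hQ : ξ ⬝ᵥ (Gf f x y u v).mulVec ξ = (4/3) * F' * y^3 * (s^2+t^2) := by
      subst hst
      simp only [Gf, Matrix.mulVec, dotProduct, Fin.sum_univ_four, he3, he4,
        ← hFdef, ← hF'def, Pi.add_apply, Pi.smul_apply, Matrix.cons_val', Matrix.cons_val_zero,
        Matrix.cons_val_one, Matrix.head_cons, Matrix.cons_val_two, Matrix.tail_cons,
        Matrix.cons_val_three, Matrix.empty_val', Matrix.cons_val_fin_one, Matrix.of_apply,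
        Matrix.head_fin_const, smul_eq_mul]
      ring
    rw [hQ]
    have hneg : (4/3) * F' * y^3 < 0 := by
      have hy3 : 0 < y^3 := by positivity
      nlinarith
    exact mul_neg_of_neg_of_pos hneg hpos
end
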